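/- Let Q : ℝⁿ → Matrix (Fin m) (Fin m) ℝ have continuously differentiable entries x ↦ q_{ij}(x). Then for every t ≥ 0, every f : Fin m → ℝ, every i ∈ Fin m and every coordinate k ∈ {1,…,n}, the map x ↦ (exp(t•Q(x)) f)(i) is differentiable in x and ∂_{x_k} (exp(t•Q(x)) f)(i) = ∫₀^t ( exp(s•Q(x)) · (∂_{x_k} Q(x)) · exp((t−s)•Q(x)) f )(i) ds. -/

import Mathlib

open MeasureTheory

noncomputable section

/-- Entrywise partial derivative `∂_{x_k} Q(x)` of a matrix-valued function of
`x ∈ ℝⁿ` in the `k`-th coordinate direction. -/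
def matPartialDeriv {n m : ℕ} (Q : EuclideanSpace ℝ (Fin n) → Matrix (Fin m) (Fin m) ℝ)
    (k : Fin n) (x : EuclideanSpace ℝ (Fin n)) : Matrix (Fin m) (Fin m) ℝ :=
  Matrix.of fun i j => fderiv ℝ (fun y => Q y i j) x (EuclideanSpace.single k 1)

/-! Differentiating `s ↦ exp (s • B) * exp ((t - s) • A)` gives Duhamel's formula
`exp (t • B) - exp (t • A) = ∫₀ᵗ exp (s • B) * (B - A) * exp ((t - s) • A) ds`
in any real Banach algebra. Taking `B = A + r • H`, the difference quotient of
`r ↦ exp (t • (A + r • H))` at `0` is `∫₀ᵗ exp (s • (A + r • H)) * H * exp ((t - s) • A) ds`,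
a parametric integral of a jointly continuous integrand, hence continuous in `r`; its value at
`r = 0` is the directional derivative. The theorem follows by the chain rule, with matrices
normed by the `L∞` operator norm and the continuous linear functional `M ↦ (M f) i`. -/

open NormedSpace Filter Topology

section BanachAlgebra

variable {𝔸 : Type*} [NormedRing 𝔸] [NormedAlgebra ℝ 𝔸] [CompleteSpace 𝔸]

/- `NormedSpace.exp_continuous` asks for a `NormedAlgebra ℚ 𝔸` structure. -/
@[fun_prop]
theorem exp_continuous_of_real : Continuous (exp : 𝔸 → 𝔸) :=
  continuous_iff_continuousAt.2 fun A => (exp_analytic (𝕂 := ℝ) A).continuousAt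

theorem exp_smul_sub_exp_smul_eq_integral (A B : 𝔸) (t : ℝ) :
    exp (t • B) - exp (t • A)
      = ∫ s in (0:ℝ)..t, exp (s • B) * (B - A) * exp ((t - s) • A) := by
  have hderiv : ∀ s : ℝ, HasDerivAt (fun u : ℝ => exp (u • B) * exp ((t - u) • A))
      (exp (s • B) * (B - A) * exp ((t - s) • A)) s := by
    intro s
    have hA : HasDerivAt (fun u : ℝ => exp ((t - u) • A)) (-(A * exp ((t - s) • A))) s := by
      simpa [Function.comp_def] using
        (hasDerivAt_exp_smul_const' A (t - s)).scomp s ((hasDerivAt_id s).const_sub t)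
    refine ((hasDerivAt_exp_smul_const B s).mul hA).congr_deriv ?_
    noncomm_ring
  rw [intervalIntegral.integral_eq_sub_of_hasDerivAt (fun s _ => hderiv s)
    (Continuous.intervalIntegrable (by fun_prop) 0 t)]
  simp

theorem hasDerivAt_exp_smul_add_smul (A H : 𝔸) (t : ℝ) :
    HasDerivAt (fun r : ℝ => exp (t • (A + r • H)))
      (∫ s in (0:ℝ)..t, exp (s • A) * H * exp ((t - s) • A)) 0 := by
  set I : ℝ → 𝔸 := fun r => ∫ s in (0:ℝ)..t, exp (s • (A + r • H)) * H * exp ((t - s) • A)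
  have hI : Continuous I :=
    intervalIntegral.continuous_parametric_intervalIntegral_of_continuous' (by fun_prop) 0 t
  have hslope : ∀ r ≠ 0, I r = slope (fun r : ℝ => exp (t • (A + r • H))) 0 r := by
    intro r hr
    rw [slope_def_module, sub_zero, zero_smul, add_zero, exp_smul_sub_exp_smul_eq_integral,
      add_sub_cancel_left, ← intervalIntegral.integral_smul]
    refine intervalIntegral.integral_congr fun s _ => ?_
    rw [mul_smul_comm, smul_mul_assoc, inv_smul_smul₀ hr]
  have hI0 : I 0 = ∫ s in (0:ℝ)..t, exp (s • A) * H * exp ((t - s) • A) := by simp [I]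
  rw [hasDerivAt_iff_tendsto_slope, ← hI0]
  exact ((hI.tendsto 0).mono_left nhdsWithin_le_nhds).congr'
    (eventually_nhdsWithin_of_forall hslope)

theorem differentiable_exp_smul (t : ℝ) : Differentiable ℝ fun A : 𝔸 => exp (t • A) :=
  fun A => (exp_analytic (t • A)).differentiableAt.comp A (differentiableAt_id.const_smul t)

variable {E : Type*} [NormedAddCommGroup E] [NormedSpace ℝ E]

theorem fderiv_exp_smul_comp_apply {Q : E → 𝔸} {x : E} (hQ : DifferentiableAt ℝ Q x)
    (t : ℝ) (e : E) :
    fderiv ℝ (fun y => exp (t • Q y)) x e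
      = ∫ s in (0:ℝ)..t, exp (s • Q x) * fderiv ℝ Q x e * exp ((t - s) • Q x) := by
  have hexp := differentiable_exp_smul (𝔸 := 𝔸) t (Q x)
  rw [fderiv_fun_comp x hexp hQ, ContinuousLinearMap.comp_apply]
  have hline : HasDerivAt (fun r : ℝ => Q x + r • fderiv ℝ Q x e) (fderiv ℝ Q x e) 0 := by
    simpa using ((hasDerivAt_id (0:ℝ)).smul_const (fderiv ℝ Q x e)).const_add (Q x)
  refine HasDerivAt.unique ?_ (hasDerivAt_exp_smul_add_smul (Q x) (fderiv ℝ Q x e) t)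
  exact hexp.hasFDerivAt.comp_hasDerivAt_of_eq 0 hline (by simp)

theorem ContinuousLinearMap.fderiv_comp_exp_smul_apply {F : Type*} [NormedAddCommGroup F]
    [NormedSpace ℝ F] [CompleteSpace F] (L : 𝔸 →L[ℝ] F) {Q : E → 𝔸} {x : E}
    (hQ : DifferentiableAt ℝ Q x) (t : ℝ) (e : E) :
    fderiv ℝ (fun y => L (exp (t • Q y))) x e
      = ∫ s in (0:ℝ)..t, L (exp (s • Q x) * fderiv ℝ Q x e * exp ((t - s) • Q x)) := by
  have hexp : DifferentiableAt ℝ (fun y => exp (t • Q y)) x :=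
    (differentiable_exp_smul t (Q x)).comp x hQ
  rw [fderiv_fun_comp x L.differentiableAt hexp, L.fderiv, ContinuousLinearMap.comp_apply,
    fderiv_exp_smul_comp_apply hQ, L.intervalIntegral_comp_comm]
  exact Continuous.intervalIntegrable (by fun_prop) 0 t

end BanachAlgebra

section Matrix

attribute [local instance] Matrix.linftyOpNormedAddCommGroup Matrix.linftyOpNormedSpace
  Matrix.linftyOpNormedRing Matrix.linftyOpNormedAlgebra

variable {E : Type*} [NormedAddCommGroup E] [NormedSpace ℝ E]
variable {ι κ : Type*} [Fintype ι] [Fintype κ]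

theorem Matrix.differentiable_of_entries [DecidableEq ι] [DecidableEq κ] {Q : E → Matrix ι κ ℝ}
    (hQ : ∀ i j, Differentiable ℝ fun x => Q x i j) : Differentiable ℝ Q := by
  have hsum : Q = fun x => ∑ i, ∑ j, Q x i j • Matrix.single i j (1 : ℝ) := by
    ext x : 1
    simp only [Matrix.smul_single, smul_eq_mul, mul_one, ← Matrix.matrix_eq_sum_single]
  rw [hsum]
  fun_prop

theorem Matrix.fderiv_apply_eq_of {Q : E → Matrix ι κ ℝ} {x : E} (hQ : DifferentiableAt ℝ Q x)
    (e : E) : fderiv ℝ Q x e = Matrix.of fun i j => fderiv ℝ (fun y => Q y i j) x e := by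
  ext i j
  rw [Matrix.of_apply]
  let entry : Matrix ι κ ℝ →L[ℝ] ℝ := (Matrix.entryLinearMap ℝ ℝ i j).toContinuousLinearMap
  rw [show (fun y => Q y i j) = entry ∘ Q from rfl,
    (entry.hasFDerivAt.comp x hQ.hasFDerivAt).fderiv]
  rfl

variable [DecidableEq ι] {Q : E → Matrix ι ι ℝ} (t : ℝ) (f : ι → ℝ) (i : ι)

def Matrix.mulVecApplyCLM : Matrix ι ι ℝ →L[ℝ] ℝ :=
  (LinearMap.proj i ∘ₗ LinearMap.applyₗ f ∘ₗ Matrix.toLin'.toLinearMap).toContinuousLinearMap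

theorem Matrix.differentiable_exp_smul_mulVec_apply
    (hQ : ∀ a b, Differentiable ℝ fun x => Q x a b) :
    Differentiable ℝ fun y => (exp (t • Q y)).mulVec f i :=
  fun y => (Matrix.mulVecApplyCLM f i).differentiableAt.comp y
    ((differentiable_exp_smul t (Q y)).comp y (Matrix.differentiable_of_entries hQ y))

theorem Matrix.fderiv_exp_smul_mulVec_apply (hQ : ∀ a b, Differentiable ℝ fun x => Q x a b)
    (x e : E) :
    fderiv ℝ (fun y => (exp (t • Q y)).mulVec f i) x e
      = ∫ s in (0:ℝ)..t, (exp (s • Q x) * (Matrix.of fun a b => fderiv ℝ (fun y => Q y a b) x e)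
          * exp ((t - s) • Q x)).mulVec f i := by
  have hQx := Matrix.differentiable_of_entries hQ x
  rw [← Matrix.fderiv_apply_eq_of hQx]
  exact (Matrix.mulVecApplyCLM f i).fderiv_comp_exp_smul_apply hQx t e

end Matrix

theorem partialDeriv_semigroup_eq_integral {n m : ℕ}
    (Q : EuclideanSpace ℝ (Fin n) → Matrix (Fin m) (Fin m) ℝ)
    (hQ : ∀ i j, ContDiff ℝ 1 fun x => Q x i j) :
    ∀ (t : ℝ), 0 ≤ t → ∀ (f : Fin m → ℝ) (i : Fin m) (k : Fin n),
      (Differentiable ℝ fun x => (NormedSpace.exp (t • Q x)).mulVec f i) ∧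
      ∀ x : EuclideanSpace ℝ (Fin n),
        fderiv ℝ (fun y => (NormedSpace.exp (t • Q y)).mulVec f i) x
            (EuclideanSpace.single k 1)
          = ∫ s in (0:ℝ)..t,
              (NormedSpace.exp (s • Q x) * matPartialDeriv Q k x *
                NormedSpace.exp ((t - s) • Q x)).mulVec f i := by
  intro t _ f i k
  have hQd : ∀ a b, Differentiable ℝ fun x => Q x a b :=
    fun a b => (hQ a b).differentiable one_ne_zero
  exact ⟨Matrix.differentiable_exp_smul_mulVec_apply t f i hQd,
    fun x => Matrix.fderiv_exp_smul_mulVec_apply t f i hQd x _⟩
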